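/- For every integer n, the product of the bicomplex Pell number BP(n) with its j-conjugate satisfies BP(n) · (BP(n))*_j = (P(n)² − P(n+1)² + P(n+2)² − P(n+3)²)·1 + 4·(P(2n+3) + P(n)·P(n+1))·i. -/

import Mathlib

open scoped TensorProduct

noncomputable def bi : ℂ ⊗[ℝ] ℂ := Complex.I ⊗ₜ[ℝ] 1
noncomputable def bj : ℂ ⊗[ℝ] ℂ := (1 : ℂ) ⊗ₜ[ℝ] Complex.I
noncomputable def bij : ℂ ⊗[ℝ] ℂ := Complex.I ⊗ₜ[ℝ] Complex.I

/-- The bicomplex Pell number `BP n = P n + P (n+1) i + P (n+2) j + P (n+3) ij`. -/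
noncomputable def BP (P : ℤ → ℤ) (n : ℤ) : ℂ ⊗[ℝ] ℂ :=
  (P n : ℝ) • (1 : ℂ ⊗[ℝ] ℂ) + (P (n + 1) : ℝ) • bi + (P (n + 2) : ℝ) • bj +
    (P (n + 3) : ℝ) • bij

/-- The j-conjugate of the bicomplex Pell number. -/
noncomputable def BPconjJ (P : ℤ → ℤ) (n : ℤ) : ℂ ⊗[ℝ] ℂ :=
  (P n : ℝ) • (1 : ℂ ⊗[ℝ] ℂ) + (P (n + 1) : ℝ) • bi - (P (n + 2) : ℝ) • bj -
    (P (n + 3) : ℝ) • bij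

/-!
Writing `x = a + b i` and `y = c + d i`, the product is
`(x + y j)(x - y j) = x² + y² = a² - b² + c² - d² + 2 (a b + c d) i`. For `BP n` it remains to see
`P(n+2) P(n+3) - P(n) P(n+1) = 2 P(2n+3)`, which follows from the addition formula
`P(m+k+1) = P(m+1) P(k+1) + P(m) P(k)` with `m = k = n+1`.
-/

lemma bi_mul_bi : bi * bi = -1 := by
  simp [bi, Algebra.TensorProduct.tmul_mul_tmul, Algebra.TensorProduct.one_def,
    TensorProduct.neg_tmul]

lemma bj_mul_bj : bj * bj = -1 := by
  simp [bj, Algebra.TensorProduct.tmul_mul_tmul, Algebra.TensorProduct.one_def,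
    TensorProduct.tmul_neg]

lemma bi_mul_bj : bi * bj = bij := by
  simp [bi, bj, bij, Algebra.TensorProduct.tmul_mul_tmul]

lemma mul_conj_eq_of_sq_eq_neg_one {R A : Type*} [CommRing R] [CommRing A] [Algebra R A]
    {i j : A} (hi : i * i = -1) (hj : j * j = -1) (a b c d : R) :
    (a • (1 : A) + b • i + c • j + d • (i * j)) * (a • (1 : A) + b • i - c • j - d • (i * j)) =
      (a ^ 2 - b ^ 2 + c ^ 2 - d ^ 2) • (1 : A) + (2 * (a * b + c * d)) • i := by
  simp only [Algebra.smul_def, map_sub, map_add, map_mul, map_pow, map_ofNat, mul_one]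
  linear_combination (algebraMap R A b ^ 2 + algebraMap R A d ^ 2) * hi -
    (algebraMap R A c + algebraMap R A d * i) ^ 2 * hj

lemma seq_eq_of_recurrence {R : Type*} [Ring R] {a b : R} (hb : IsUnit b) {f g : ℤ → R}
    (hf : ∀ n, f (n + 2) = a * f (n + 1) + b * f n)
    (hg : ∀ n, g (n + 2) = a * g (n + 1) + b * g n)
    (h0 : f 0 = g 0) (h1 : f 1 = g 1) : f = g := by
  suffices h : ∀ n : ℤ, f n = g n ∧ f (n + 1) = g (n + 1) from funext fun n => (h n).1
  intro n
  induction n using Int.induction_on with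
  | zero => exact ⟨h0, h1⟩
  | succ k ih =>
    refine ⟨ih.2, ?_⟩
    rw [add_assoc, one_add_one_eq_two, hf, hg, ih.1, ih.2]
  | pred k ih =>
    refine ⟨hb.mul_left_cancel ?_, by rw [sub_add_cancel]; exact ih.1⟩
    have hf' := hf (-k - 1)
    have hg' := hg (-k - 1)
    rw [show -(k : ℤ) - 1 + 2 = -k + 1 by ring, sub_add_cancel, ih.1, ih.2] at hf'
    rw [show -(k : ℤ) - 1 + 2 = -k + 1 by ring, sub_add_cancel] at hg'
    exact add_left_cancel (hf'.symm.trans hg')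

section Pell

variable {P : ℤ → ℤ} (hP : ∀ n : ℤ, P (n + 2) = 2 * P (n + 1) + P n)
include hP

lemma pell_add_add_one (hP0 : P 0 = 0) (hP1 : P 1 = 1) (m k : ℤ) :
    P (m + k + 1) = P (m + 1) * P (k + 1) + P m * P k := by
  have hP2 : P 2 = 2 := by simpa [hP0, hP1] using hP 0
  have key := seq_eq_of_recurrence (a := 2) isUnit_one
    (f := fun k => P (m + k + 1)) (g := fun k => P (m + 1) * P (k + 1) + P m * P k)
    (fun k => by
      simp only [one_mul]
      rw [show m + (k + 2) + 1 = m + k + 1 + 2 by ring,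
        show m + (k + 1) + 1 = m + k + 1 + 1 by ring]
      exact hP _)
    (fun k => by
      simp only [one_mul]
      rw [show k + 2 + 1 = k + 1 + 2 by ring, hP, hP k]
      ring)
    (by simp [hP0, hP1])
    (by
      simp only [one_add_one_eq_two, hP1, hP2]
      rw [show m + 1 + 1 = m + 2 by ring, hP]
      ring)
  exact congrFun key k

lemma pell_mul_sub_mul (hP0 : P 0 = 0) (hP1 : P 1 = 1) (n : ℤ) :
    P (n + 2) * P (n + 3) - P n * P (n + 1) = 2 * P (2 * n + 3) := by
  have hdouble := pell_add_add_one hP hP0 hP1 (n + 1) (n + 1)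
  rw [show n + 1 + (n + 1) + 1 = 2 * n + 3 by ring, show n + 1 + 1 = n + 2 by ring] at hdouble
  have hstep := hP (n + 1)
  rw [show n + 1 + 2 = n + 3 by ring, show n + 1 + 1 = n + 2 by ring] at hstep
  linear_combination P (n + 2) * hstep + P (n + 1) * hP n - 2 * hdouble

end Pell

theorem bicomplexPell_mul_conjJ (P : ℤ → ℤ)
    (hP : ∀ n : ℤ, P (n + 2) = 2 * P (n + 1) + P n) (hP0 : P 0 = 0) (hP1 : P 1 = 1)
    (n : ℤ) :
    BP P n * BPconjJ P n =
      ((P n : ℝ) ^ 2 - (P (n + 1) : ℝ) ^ 2 + (P (n + 2) : ℝ) ^ 2 - (P (n + 3) : ℝ) ^ 2) •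
          (1 : ℂ ⊗[ℝ] ℂ) +
        (4 * ((P (2 * n + 3) : ℝ) + (P n : ℝ) * (P (n + 1) : ℝ))) • bi := by
  have hcross : (P (n + 2) : ℝ) * P (n + 3) - P n * P (n + 1) = 2 * P (2 * n + 3) := by
    exact_mod_cast pell_mul_sub_mul hP hP0 hP1 n
  rw [BP, BPconjJ, ← bi_mul_bj, mul_conj_eq_of_sq_eq_neg_one bi_mul_bi bj_mul_bj]
  congr 2
  linear_combination 2 * hcross
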